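/- arXiv:nlin/0612037 — 11 statements merged into one kernel-verified Lean document; each statement's English description precedes it below -/
import Mathlib

section
/- Let n ≥ 1, let J be a constant diagonal n×n real matrix and D a real constant. For an n×n real matrix Ψ and a symmetric n×n real matrix Γ set M(Ψ) := ΨJ − JΨᵀ and K(Ψ,Γ) := Ψ(J + (D/2)Γ) − (J + (D/2)Γ)Ψᵀ + (D/2)(ΓΨ − ΨᵀΓ). Suppose Ω and Ω′ are n×n real matrices with ΩΩᵀ = I, Γ is symmetric, and Γ′ := ΩᵀΓΩ. If the discrete Lagrange–d'Alembert update equation M(Ω′) + (D/2)(Ω′Γ′ + Γ′Ω′) − (D/2)(Ω′ᵀΓ′ + Γ′Ω′ᵀ) = ΩᵀM(Ω)Ω + (D/2)(ΩΓ′ + Γ′Ω) − (D/2)(ΩᵀΓ′ + Γ′Ωᵀ) holds, then the discrete momentum satisfies K(Ω′,Γ′) = Ωᵀ K(Ω,Γ) Ω. -/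
open Matrix

/-- Proposition 1: the discrete Lagrange–d'Alembert update equation of the
discretized `n`-dimensional Chaplygin sphere implies the momentum-conservation
form `K(Ω',Γ') = Ωᵀ K(Ω,Γ) Ω`. -/
theorem discrete_chaplygin_momentum_form
    (n : ℕ) (hn : 1 ≤ n)
    (J : Matrix (Fin n) (Fin n) ℝ) (hJ : J.IsDiag) (D : ℝ)
    (M : Matrix (Fin n) (Fin n) ℝ → Matrix (Fin n) (Fin n) ℝ)
    (hM : ∀ Ψ, M Ψ = Ψ * J - J * Ψᵀ)
    (K : Matrix (Fin n) (Fin n) ℝ → Matrix (Fin n) (Fin n) ℝ → Matrix (Fin n) (Fin n) ℝ)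
    (hK : ∀ Ψ Γ, K Ψ Γ = Ψ * (J + (D/2) • Γ) - (J + (D/2) • Γ) * Ψᵀ
        + (D/2) • (Γ * Ψ - Ψᵀ * Γ))
    (Ω Ω' Γ Γ' : Matrix (Fin n) (Fin n) ℝ)
    (hΩ : Ω * Ωᵀ = 1) (hΓ : Γᵀ = Γ) (hΓ' : Γ' = Ωᵀ * Γ * Ω)
    (hupdate : M Ω' + (D/2) • (Ω' * Γ' + Γ' * Ω') - (D/2) • (Ω'ᵀ * Γ' + Γ' * Ω'ᵀ)
      = Ωᵀ * M Ω * Ω + (D/2) • (Ω * Γ' + Γ' * Ω) - (D/2) • (Ωᵀ * Γ' + Γ' * Ωᵀ)) :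
    K Ω' Γ' = Ωᵀ * K Ω Γ * Ω := by
  have h1 : Ωᵀ * Ω = 1 := mul_eq_one_comm.mp hΩ
  have e1 : ∀ X : Matrix (Fin n) (Fin n) ℝ, Ω * (Ωᵀ * X) = X := fun X => by
    rw [← Matrix.mul_assoc, hΩ, one_mul]
  have e2 : ∀ X : Matrix (Fin n) (Fin n) ℝ, Ωᵀ * (Ω * X) = X := fun X => by
    rw [← Matrix.mul_assoc, h1, one_mul]
  simp only [hK, hM, hΓ'] at hupdate ⊢
  simp only [mul_add, add_mul, sub_mul, mul_sub, smul_add, smul_sub, mul_smul_comm,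
    smul_mul_assoc, Matrix.mul_assoc, e1, e2, hΩ, h1, mul_one, one_mul] at hupdate ⊢
  abel_nf at hupdate ⊢
  linear_combination (norm := abel_nf) hupdate
end

section
/- Let Ĵ₁, Ĵ₂, Ĵ₃ be real numbers, let Λ := diag(Ĵ₂+Ĵ₃, Ĵ₁+Ĵ₃, Ĵ₁+Ĵ₂) with all three diagonal entries nonzero, let (q₀,q₁,q₂,q₃) ∈ ℝ⁴, and let σ ≠ 0 be real. Define vectors γ, γ̃ ∈ ℝ³ by γ = (2/σ)·((Ĵ₂+Ĵ₃)q₀q₁ + (Ĵ₂−Ĵ₃)q₂q₃, (Ĵ₁+Ĵ₃)q₀q₂ + (Ĵ₃−Ĵ₁)q₁q₃, (Ĵ₁+Ĵ₂)q₀q₃ + (Ĵ₁−Ĵ₂)q₁q₂) and γ̃ = (2/σ)·((Ĵ₂+Ĵ₃)q₀q₁ − (Ĵ₂−Ĵ₃)q₂q₃, (Ĵ₁+Ĵ₃)q₀q₂ − (Ĵ₃−Ĵ₁)q₁q₃, (Ĵ₁+Ĵ₂)q₀q₃ − (Ĵ₁−Ĵ₂)q₁q₂). Then ⟨γ, Λ⁻¹γ⟩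 = ⟨γ̃, Λ⁻¹γ̃⟩. -/
open Matrix

/-- Proposition 3: the reduced map `G_h` of the discrete Chaplygin sphere on `E(3)`,
written in Euler-parameter form, preserves the quadratic integral `⟨γ, Λ⁻¹γ⟩`. -/
theorem discrete_chaplygin_quadratic_integral
    (J1 J2 J3 : ℝ)
    (Λ : Matrix (Fin 3) (Fin 3) ℝ)
    (hΛ : Λ = Matrix.diagonal ![J2 + J3, J1 + J3, J1 + J2])
    (h1 : J2 + J3 ≠ 0) (h2 : J1 + J3 ≠ 0) (h3 : J1 + J2 ≠ 0)
    (q0 q1 q2 q3 : ℝ) (σ : ℝ) (hσ : σ ≠ 0)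
    (γ γt : Fin 3 → ℝ)
    (hγ : γ = (2/σ) • ![(J2 + J3)*q0*q1 + (J2 - J3)*q2*q3,
                        (J1 + J3)*q0*q2 + (J3 - J1)*q1*q3,
                        (J1 + J2)*q0*q3 + (J1 - J2)*q1*q2])
    (hγt : γt = (2/σ) • ![(J2 + J3)*q0*q1 - (J2 - J3)*q2*q3,
                          (J1 + J3)*q0*q2 - (J3 - J1)*q1*q3,
                          (J1 + J2)*q0*q3 - (J1 - J2)*q1*q2]) :
    γ ⬝ᵥ (Λ⁻¹ *ᵥ γ) = γt ⬝ᵥ (Λ⁻¹ *ᵥ γt) := by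
  have hinv : Λ⁻¹ = Matrix.diagonal ![(J2 + J3)⁻¹, (J1 + J3)⁻¹, (J1 + J2)⁻¹] := by
    apply Matrix.inv_eq_right_inv
    rw [hΛ, Matrix.diagonal_mul_diagonal]
    ext i j
    fin_cases i <;> fin_cases j <;>
      simp [Matrix.diagonal, mul_inv_cancel₀, h1, h2, h3, Matrix.one_apply]
  subst hγ hγt
  rw [hinv]
  simp only [Matrix.smul_cons, Matrix.smul_empty, smul_eq_mul]
  simp only [Matrix.mulVec_diagonal, dotProduct, Fin.sum_univ_three,
    Matrix.cons_val_zero, Matrix.cons_val_one, Matrix.head_cons,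
    Matrix.cons_val_two, Matrix.tail_cons]
  field_simp
  ring
end

section
/- Let Ĵ₁, Ĵ₂, Ĵ₃ be real numbers, Λ := diag(Ĵ₂+Ĵ₃, Ĵ₁+Ĵ₃, Ĵ₁+Ĵ₂) with all diagonal entries nonzero, (q₀,q₁,q₂,q₃) ∈ ℝ⁴ with q₀ ≠ 0, and σ ≠ 0 real. Define γ, γ̃ ∈ ℝ³ by γ = (2/σ)·((Ĵ₂+Ĵ₃)q₀q₁ + (Ĵ₂−Ĵ₃)q₂q₃, (Ĵ₁+Ĵ₃)q₀q₂ + (Ĵ₃−Ĵ₁)q₁q₃, (Ĵ₁+Ĵ₂)q₀q₃ + (Ĵ₁−Ĵ₂)q₁q₂) and γ̃ = (2/σ)·((Ĵ₂+Ĵ₃)q₀q₁ − (Ĵ₂−Ĵ₃)q₂q₃, (Ĵ₁+Ĵ₃)q₀q₂ − (Ĵ₃−Ĵ₁)q₁q₃, (Ĵ₁+Ĵ₂)q₀q₃ − (Ĵ₁−Ĵ₂)q₁q₂). Then γ̃ − γ = (σ/(4q₀²)) · (γ̃ + γ) × (Λ⁻¹(γ̃ + γ)), where × is the cross product on ℝ³.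 -/
open Matrix

/-- The core identity in Proposition 4: the reduced map `G_h` of the discrete
Chaplygin sphere admits the implicit symmetric form
`γ̃ − γ = (σ/(4q₀²)) (γ̃+γ) × Λ⁻¹(γ̃+γ)`. -/
theorem discrete_chaplygin_symmetric_form
    (J1 J2 J3 : ℝ)
    (Λ : Matrix (Fin 3) (Fin 3) ℝ)
    (hΛ : Λ = Matrix.diagonal ![J2 + J3, J1 + J3, J1 + J2])
    (h1 : J2 + J3 ≠ 0) (h2 : J1 + J3 ≠ 0) (h3 : J1 + J2 ≠ 0)
    (q0 q1 q2 q3 : ℝ) (hq0 : q0 ≠ 0) (σ : ℝ) (hσ : σ ≠ 0)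
    (γ γt : Fin 3 → ℝ)
    (hγ : γ = (2/σ) • ![(J2 + J3)*q0*q1 + (J2 - J3)*q2*q3,
                        (J1 + J3)*q0*q2 + (J3 - J1)*q1*q3,
                        (J1 + J2)*q0*q3 + (J1 - J2)*q1*q2])
    (hγt : γt = (2/σ) • ![(J2 + J3)*q0*q1 - (J2 - J3)*q2*q3,
                          (J1 + J3)*q0*q2 - (J3 - J1)*q1*q3,
                          (J1 + J2)*q0*q3 - (J1 - J2)*q1*q2]) :
    γt - γ = (σ/(4*q0^2)) • crossProduct (γt + γ) (Λ⁻¹ *ᵥ (γt + γ)) := by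
  have hinv : Λ⁻¹ = Matrix.diagonal ![(J2 + J3)⁻¹, (J1 + J3)⁻¹, (J1 + J2)⁻¹] := by
    rw [hΛ]
    apply Matrix.inv_eq_right_inv
    ext i j
    fin_cases i <;> fin_cases j <;>
      simp [Matrix.mul_apply, Matrix.diagonal, Fin.sum_univ_three, h1, h2, h3]
  have hsum : γt + γ = ![(4/σ)*((J2 + J3)*q0*q1), (4/σ)*((J1 + J3)*q0*q2),
      (4/σ)*((J1 + J2)*q0*q3)] := by
    subst hγ hγt
    funext i
    fin_cases i <;> simp <;> ring
  have hmv : Λ⁻¹ *ᵥ (γt + γ) = ![(4/σ)*(q0*q1), (4/σ)*(q0*q2), (4/σ)*(q0*q3)] := by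
    rw [hinv, hsum]
    funext i
    fin_cases i <;>
      simp [Matrix.mulVec, Matrix.diagonal, dotProduct, Fin.sum_univ_three] <;>
      field_simp <;> ring
  rw [hmv, hsum, cross_apply]
  subst hγ hγt
  funext i
  fin_cases i <;>
    simp <;> field_simp <;> ring
end

section
/- Let Ĵ₁, Ĵ₂, Ĵ₃ be real numbers, Λ := diag(Ĵ₂+Ĵ₃, Ĵ₁+Ĵ₃, Ĵ₁+Ĵ₂), (q₀,q₁,q₂,q₃) ∈ ℝ⁴, q := (q₁,q₂,q₃) ∈ ℝ³, and σ ≠ 0 real. Define γ, γ̃ ∈ ℝ³ by γ = (2/σ)·((Ĵ₂+Ĵ₃)q₀q₁ + (Ĵ₂−Ĵ₃)q₂q₃, (Ĵ₁+Ĵ₃)q₀q₂ + (Ĵ₃−Ĵ₁)q₁q₃, (Ĵ₁+Ĵ₂)q₀q₃ + (Ĵ₁−Ĵ₂)q₁q₂) and γ̃ = (2/σ)·((Ĵ₂+Ĵ₃)q₀q₁ − (Ĵ₂−Ĵ₃)q₂q₃, (Ĵ₁+Ĵ₃)q₀q₂ − (Ĵ₃−Ĵ₁)q₁q₃, (Ĵ₁+Ĵ₂)q₀q₃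 − (Ĵ₁−Ĵ₂)q₁q₂). Then γ̃ + γ = (4q₀/σ)·Λq and γ̃ − γ = (4/σ)·(Λq) × q, where Λq multiplies the i-th component of q by the i-th diagonal entry of Λ and × is the cross product on ℝ³. -/
open Matrix

/-- Key identities (g_q) in the proof of Proposition 4: the sum and difference of
the consecutive vertical vectors of the discrete Chaplygin sphere are expressed
through the rotation axis vector `q` and `q₀`:
`γ̃ + γ = (4q₀/σ) Λq` and `γ̃ − γ = (4/σ) (Λq) × q`. -/
theorem discrete_chaplygin_sum_difference
    (J1 J2 J3 : ℝ)
    (Λ : Matrix (Fin 3) (Fin 3) ℝ)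
    (hΛ : Λ = Matrix.diagonal ![J2 + J3, J1 + J3, J1 + J2])
    (q0 q1 q2 q3 : ℝ) (q : Fin 3 → ℝ) (hq : q = ![q1, q2, q3])
    (σ : ℝ) (hσ : σ ≠ 0)
    (γ γt : Fin 3 → ℝ)
    (hγ : γ = (2/σ) • ![(J2 + J3)*q0*q1 + (J2 - J3)*q2*q3,
                        (J1 + J3)*q0*q2 + (J3 - J1)*q1*q3,
                        (J1 + J2)*q0*q3 + (J1 - J2)*q1*q2])
    (hγt : γt = (2/σ) • ![(J2 + J3)*q0*q1 - (J2 - J3)*q2*q3,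
                          (J1 + J3)*q0*q2 - (J3 - J1)*q1*q3,
                          (J1 + J2)*q0*q3 - (J1 - J2)*q1*q2]) :
    γt + γ = ((4*q0)/σ) • (Λ *ᵥ q) ∧ γt - γ = (4/σ) • crossProduct (Λ *ᵥ q) q := by
  subst hΛ hq hγ hγt
  constructor <;>
    funext i <;>
    fin_cases i <;>
    simp [crossProduct, Matrix.mulVec, Matrix.diagonal, Fin.sum_univ_three,
      dotProduct, Matrix.vecHead, Matrix.vecTail, Function.comp] <;>
    ring
end

section
/- Let Ĵ₁, Ĵ₂, Ĵ₃, D, h be real numbers, Λ := diag(Ĵ₂+Ĵ₃, Ĵ₁+Ĵ₃, Ĵ₁+Ĵ₂) with all diagonal entries nonzero, (q₀,q₁,q₂,q₃) ∈ ℝ⁴, q := (q₁,q₂,q₃). Suppose σ ∈ ℝ is nonzero and satisfies σ = h + D·q₀·⟨γ, q⟩, where γ, γ̃ ∈ ℝ³ are defined by γ = (2/σ)·((Ĵ₂+Ĵ₃)q₀q₁ + (Ĵ₂−Ĵ₃)q₂q₃, (Ĵ₁+Ĵ₃)q₀q₂ + (Ĵ₃−Ĵ₁)q₁q₃, (Ĵ₁+Ĵ₂)q₀q₃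 + (Ĵ₁−Ĵ₂)q₁q₂) and γ̃ = (2/σ)·((Ĵ₂+Ĵ₃)q₀q₁ − (Ĵ₂−Ĵ₃)q₂q₃, (Ĵ₁+Ĵ₃)q₀q₂ − (Ĵ₃−Ĵ₁)q₁q₃, (Ĵ₁+Ĵ₂)q₀q₃ − (Ĵ₁−Ĵ₂)q₁q₂). Then σ = h + (D·σ/4)·⟨γ, Λ⁻¹(γ̃+γ)⟩ and moreover σ·(1 − (D/8)·⟨γ̃+γ, Λ⁻¹(γ̃+γ)⟩) = h. -/
/-!
Write `J = diag(J₁, J₂, J₃)`. Then `γ = (2/σ)(q₀Λq + Jq × q)` and `γ̃ = (2/σ)(q₀Λq − Jq × q)`,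
so `Λ⁻¹(γ̃ + γ) = (4q₀/σ) q`, and `⟨γ̃, q⟩ = ⟨γ, q⟩` because the cross product is orthogonal
to `q`. Both quadratic forms in the claim therefore reduce to multiples of `q₀⟨γ, q⟩`, and the
fixed-point equation `σ = h + D q₀⟨γ, q⟩` gives both identities.
-/

open Matrix

section

variable {R : Type*} [CommRing R]

theorem diagonal_mulVec_smul_add_cross (J1 J2 J3 q0 q1 q2 q3 : R) :
    ![(J2 + J3)*q0*q1 + (J2 - J3)*q2*q3,
      (J1 + J3)*q0*q2 + (J3 - J1)*q1*q3,
      (J1 + J2)*q0*q3 + (J1 - J2)*q1*q2] =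
    diagonal ![J2 + J3, J1 + J3, J1 + J2] *ᵥ (q0 • ![q1, q2, q3]) +
      (diagonal ![J1, J2, J3] *ᵥ ![q1, q2, q3]) ⨯₃ ![q1, q2, q3] := by
  ext i; fin_cases i <;> simp [cross_apply, mulVec_diagonal] <;> ring

theorem diagonal_mulVec_smul_sub_cross (J1 J2 J3 q0 q1 q2 q3 : R) :
    ![(J2 + J3)*q0*q1 - (J2 - J3)*q2*q3,
      (J1 + J3)*q0*q2 - (J3 - J1)*q1*q3,
      (J1 + J2)*q0*q3 - (J1 - J2)*q1*q2] =
    diagonal ![J2 + J3, J1 + J3, J1 + J2] *ᵥ (q0 • ![q1, q2, q3]) -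
      (diagonal ![J1, J2, J3] *ᵥ ![q1, q2, q3]) ⨯₃ ![q1, q2, q3] := by
  ext i; fin_cases i <;> simp [cross_apply, mulVec_diagonal] <;> ring

theorem smul_sub_dotProduct_eq_smul_add_dotProduct {ι : Type*} [Fintype ι]
    (c : R) (a b v : ι → R) (hb : b ⬝ᵥ v = 0) :
    (c • (a - b)) ⬝ᵥ v = (c • (a + b)) ⬝ᵥ v := by
  simp only [smul_dotProduct, sub_dotProduct, add_dotProduct, hb, sub_zero, add_zero]

theorem inv_mulVec_smul_sub_add_smul_add {ι : Type*} [Fintype ι] [DecidableEq ι]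
    (Λ : Matrix ι ι R) (hΛ : IsUnit Λ.det) (c : R) (v b : ι → R) :
    Λ⁻¹ *ᵥ (c • (Λ *ᵥ v - b) + c • (Λ *ᵥ v + b)) = (2 * c) • v := by
  have hsum : c • (Λ *ᵥ v - b) + c • (Λ *ᵥ v + b) = Λ *ᵥ ((2 * c) • v) := by
    rw [mulVec_smul]; module
  rw [hsum, mulVec_mulVec, nonsing_inv_mul Λ hΛ, one_mulVec]

end

/-- Determination of the factor `σ` in Proposition 4 (formula (sigmas)): the scalar
`σ` of the Euler-parameter form of the reduced discrete Chaplygin sphere map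
satisfies `σ = h + (Dσ/4)⟨γ, Λ⁻¹(γ̃+γ)⟩` and
`σ (1 − (D/8)⟨γ̃+γ, Λ⁻¹(γ̃+γ)⟩) = h`. -/
theorem discrete_chaplygin_sigma
    (J1 J2 J3 D h : ℝ)
    (Λ : Matrix (Fin 3) (Fin 3) ℝ)
    (hΛ : Λ = Matrix.diagonal ![J2 + J3, J1 + J3, J1 + J2])
    (h1 : J2 + J3 ≠ 0) (h2 : J1 + J3 ≠ 0) (h3 : J1 + J2 ≠ 0)
    (q0 q1 q2 q3 : ℝ) (q : Fin 3 → ℝ) (hq : q = ![q1, q2, q3])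
    (σ : ℝ) (hσ : σ ≠ 0)
    (γ γt : Fin 3 → ℝ)
    (hγ : γ = (2/σ) • ![(J2 + J3)*q0*q1 + (J2 - J3)*q2*q3,
                        (J1 + J3)*q0*q2 + (J3 - J1)*q1*q3,
                        (J1 + J2)*q0*q3 + (J1 - J2)*q1*q2])
    (hγt : γt = (2/σ) • ![(J2 + J3)*q0*q1 - (J2 - J3)*q2*q3,
                          (J1 + J3)*q0*q2 - (J3 - J1)*q1*q3,
                          (J1 + J2)*q0*q3 - (J1 - J2)*q1*q2])
    (hfix : σ = h + D * q0 * (γ ⬝ᵥ q)) :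
    σ = h + (D * σ / 4) * (γ ⬝ᵥ (Λ⁻¹ *ᵥ (γt + γ))) ∧
    σ * (1 - (D/8) * ((γt + γ) ⬝ᵥ (Λ⁻¹ *ᵥ (γt + γ)))) = h := by
  set b := (diagonal ![J1, J2, J3] *ᵥ q) ⨯₃ q
  have hγ' : γ = (2/σ) • (Λ *ᵥ (q0 • q) + b) := by
    rw [hγ, diagonal_mulVec_smul_add_cross, ← hΛ, ← hq]
  have hγt' : γt = (2/σ) • (Λ *ᵥ (q0 • q) - b) := by
    rw [hγt, diagonal_mulVec_smul_sub_cross, ← hΛ, ← hq]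
  have hdet : IsUnit Λ.det := by
    simp [hΛ, det_diagonal, Fin.prod_univ_three, h1, h2, h3]
  have hinv_sum : Λ⁻¹ *ᵥ (γt + γ) = (2 * (2/σ) * q0) • q := by
    rw [hγ', hγt', inv_mulVec_smul_sub_add_smul_add Λ hdet, smul_smul]
  have hsym : γt ⬝ᵥ q = γ ⬝ᵥ q := by
    rw [hγ', hγt']
    exact smul_sub_dotProduct_eq_smul_add_dotProduct _ _ _ _
      (by rw [dotProduct_comm]; exact dot_cross_self _ _)
  rw [hinv_sum, dotProduct_smul, dotProduct_smul, add_dotProduct, hsym, smul_eq_mul, smul_eq_mul]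
  field_simp
  constructor
  · linear_combination 4 * hfix
  · linear_combination 8 * hfix
end

section
/- Let n ≥ 1, let J be a constant diagonal n×n real matrix, and let m, ρ be real constants with D := mρ². Suppose ω : ℝ → Mₙ(ℝ) is differentiable with ω(t)ᵀ = −ω(t) for all t, and γ, v, F : ℝ → ℝⁿ are differentiable, satisfying for all t: (i) the Euler–Lagrange equation M′(t) + [ω(t), M(t)] = ρ·(F(t)γ(t)ᵀ − γ(t)F(t)ᵀ) where M := Jω + ωJ and [A,B] := AB − BA; (ii) m·(v′(t) + ω(t)v(t)) = F(t); (iii) γ′(t) = −ω(t)γ(t); and (iv) the rolling constraint v(t) = −ρ·ω(t)γ(t). Define Γ(t) := γ(t)γ(t)ᵀ and K(t) := Jω(t) + ω(t)J + D(Γ(t)ω(t) + ω(t)Γ(t)). Then for all t, K′(t) + [ω(t), K(t)] = 0 and Γ′(t) + [ω(t), Γ(t)] = 0. -/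
/-!
Write `Γ = γγᵀ` and `M = Jω + ωJ`. The rolling constraint `v = -ρωγ` together with
`γ̇ = -ωγ` turns Newton's law into `F = -mρ ω̇γ`, and since `ω̇` is skew-symmetric the torque
`ρ(Fγᵀ - γFᵀ)` becomes `-D(ω̇Γ + Γω̇)`. The Euler–Lagrange equation thus reads
`Jω̇ + ω̇J + [ω, M] = -D(ω̇Γ + Γω̇)`, with the force eliminated. Skew-symmetry of `ω` also gives
`Γ̇ = -[ω, Γ]`, and then `K̇ + [ω, K] = 0` follows because `[ω, ·]` is a derivation:
`[ω, Γω + ωΓ] = [ω, Γ]ω + ω[ω, Γ]`.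
-/

open Matrix

-- With the entrywise sup norm, a derivative of a matrix-valued function is an entrywise derivative.
attribute [local instance] Matrix.normedAddCommGroup Matrix.normedSpace

section Calculus

variable {𝕜 : Type*} [NontriviallyNormedField 𝕜] {l m n : Type*}

theorem Matrix.hasDerivAt_iff_entrywise [Fintype m] [Fintype n] {A : 𝕜 → Matrix m n 𝕜}
    {A' : Matrix m n 𝕜} {t : 𝕜} :
    HasDerivAt A A' t ↔ ∀ i j, HasDerivAt (fun s => A s i j) (A' i j) t :=
  hasDerivAt_pi.trans (forall_congr' fun _ => hasDerivAt_pi)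

theorem HasDerivAt.matrix_mul [Fintype l] [Fintype m] [Fintype n] {A : 𝕜 → Matrix l m 𝕜}
    {B : 𝕜 → Matrix m n 𝕜} {A' : Matrix l m 𝕜} {B' : Matrix m n 𝕜} {t : 𝕜}
    (hA : HasDerivAt A A' t) (hB : HasDerivAt B B' t) :
    HasDerivAt (fun s => A s * B s) (A' * B t + A t * B') t := by
  rw [hasDerivAt_iff_entrywise] at *
  intro i j
  simp only [mul_apply, Matrix.add_apply, ← Finset.sum_add_distrib]
  exact HasDerivAt.fun_sum fun k _ => (hA i k).fun_mul (hB k j)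

theorem HasDerivAt.matrix_mulVec [Fintype m] [Fintype n] {A : 𝕜 → Matrix m n 𝕜}
    {x : 𝕜 → n → 𝕜} {A' : Matrix m n 𝕜} {x' : n → 𝕜} {t : 𝕜}
    (hA : HasDerivAt A A' t) (hx : HasDerivAt x x' t) :
    HasDerivAt (fun s => A s *ᵥ x s) (A' *ᵥ x t + A t *ᵥ x') t := by
  rw [hasDerivAt_iff_entrywise] at hA
  rw [hasDerivAt_pi] at *
  intro i
  simp only [mulVec, dotProduct, Pi.add_apply, ← Finset.sum_add_distrib]
  exact HasDerivAt.fun_sum fun k _ => (hA i k).fun_mul (hx k)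

theorem HasDerivAt.vecMulVec [Fintype m] [Fintype n] {x : 𝕜 → m → 𝕜} {y : 𝕜 → n → 𝕜}
    {x' : m → 𝕜} {y' : n → 𝕜} {t : 𝕜} (hx : HasDerivAt x x' t) (hy : HasDerivAt y y' t) :
    HasDerivAt (fun s => vecMulVec (x s) (y s)) (vecMulVec x' (y t) + vecMulVec (x t) y') t := by
  rw [hasDerivAt_pi] at hx hy
  rw [hasDerivAt_iff_entrywise]
  intro i j
  simpa only [vecMulVec_apply, Matrix.add_apply] using (hx i).fun_mul (hy j)

theorem HasDerivAt.matrix_transpose [Fintype m] [Fintype n] {A : 𝕜 → Matrix m n 𝕜}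
    {A' : Matrix m n 𝕜} {t : 𝕜} (hA : HasDerivAt A A' t) :
    HasDerivAt (fun s => (A s)ᵀ) A'ᵀ t := by
  rw [hasDerivAt_iff_entrywise] at *
  exact fun i j => hA j i

theorem HasDerivAt.transpose_eq_neg [Fintype n] {A : 𝕜 → Matrix n n 𝕜} {A' : Matrix n n 𝕜}
    {t : 𝕜} (hA : HasDerivAt A A' t) (hskew : ∀ s, (A s)ᵀ = -A s) : A'ᵀ = -A' := by
  have hAt := hA.matrix_transpose
  simp only [hskew] at hAt
  exact hAt.unique hA.neg

end Calculus

theorem Matrix.vecMulVec_mulVec_of_transpose_eq_neg {R n : Type*} [CommRing R] [Fintype n]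
    {W : Matrix n n R} (hW : Wᵀ = -W) (x y : n → R) :
    vecMulVec x (W *ᵥ y) = -(vecMulVec x y * W) := by
  rw [← vecMul_transpose, ← vecMulVec_mul, hW, Matrix.mul_neg]

theorem angular_momentum_identity {R A : Type*} [CommRing R] [NonUnitalRing A] [Module R A]
    [IsScalarTower R A A] [SMulCommClass R A A]
    (J a W G : A) (D : R)
    (hEL : J * W + W * J + (a * (J * a + a * J) - (J * a + a * J) * a)
      = -(D • (W * G + G * W))) :
    J * W + W * J + D • (-(a * G - G * a) * a + G * W + (W * G + a * -(a * G - G * a)))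
      = -(a * (J * a + a * J + D • (G * a + a * G))
          - (J * a + a * J + D • (G * a + a * G)) * a) := by
  rw [eq_sub_of_add_eq hEL]
  -- the `D`-terms cancel because `[a, ·]` is a derivation of `A`
  simp only [mul_add, add_mul, mul_sub, sub_mul, mul_neg, neg_mul, mul_smul_comm, smul_mul_assoc,
    smul_add, smul_sub, smul_neg, mul_assoc]
  abel

section ChaplyginSphere

variable {𝕜 : Type*} [NontriviallyNormedField 𝕜] {n : Type*} [Fintype n]

theorem hasDerivAt_vecMulVec_self_of_rotation {γ : 𝕜 → n → 𝕜} {W : Matrix n n 𝕜} {t : 𝕜}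
    (hW : Wᵀ = -W) (hγ : HasDerivAt γ (-(W *ᵥ γ t)) t) :
    HasDerivAt (fun s => vecMulVec (γ s) (γ s))
      (-(W * vecMulVec (γ t) (γ t) - vecMulVec (γ t) (γ t) * W)) t := by
  convert hγ.vecMulVec hγ using 1
  rw [neg_vecMulVec, vecMulVec_neg, ← mul_vecMulVec, vecMulVec_mulVec_of_transpose_eq_neg hW]
  abel

theorem rolling_reaction_force {ω : 𝕜 → Matrix n n 𝕜} {γ v : 𝕜 → n → 𝕜} {W : Matrix n n 𝕜}
    {v' : n → 𝕜} {t m ρ : 𝕜} (hω : HasDerivAt ω W t) (hγ : HasDerivAt γ (-(ω t *ᵥ γ t)) t)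
    (hv : HasDerivAt v v' t) (hconstr : ∀ s, v s = -(ρ • (ω s *ᵥ γ s))) :
    m • (v' + ω t *ᵥ v t) = -((m * ρ) • (W *ᵥ γ t)) := by
  have hv' : v' = -(ρ • (W *ᵥ γ t + ω t *ᵥ -(ω t *ᵥ γ t))) := by
    simp only [funext hconstr] at hv
    exact hv.unique ((hω.matrix_mulVec hγ).const_smul ρ).neg
  rw [hv', hconstr t]
  simp only [mulVec_neg, mulVec_smul, smul_add, smul_neg, smul_smul]
  abel

theorem torque_of_rolling_reaction_force {W : Matrix n n 𝕜} (hW : Wᵀ = -W) (γ : n → 𝕜)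
    (m ρ : 𝕜) :
    ρ • (vecMulVec (-((m * ρ) • (W *ᵥ γ))) γ - vecMulVec γ (-((m * ρ) • (W *ᵥ γ))))
      = -((m * ρ ^ 2) • (W * vecMulVec γ γ + vecMulVec γ γ * W)) := by
  rw [neg_vecMulVec, vecMulVec_neg, smul_vecMulVec, vecMulVec_smul, ← mul_vecMulVec,
    vecMulVec_mulVec_of_transpose_eq_neg hW]
  module

theorem hasDerivAt_angular_momentum {J : Matrix n n 𝕜} {ω Γ : 𝕜 → Matrix n n 𝕜}
    {W : Matrix n n 𝕜} {t D : 𝕜} (hω : HasDerivAt ω W t)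
    (hΓ : HasDerivAt Γ (-(ω t * Γ t - Γ t * ω t)) t)
    (hEL : J * W + W * J + (ω t * (J * ω t + ω t * J) - (J * ω t + ω t * J) * ω t)
      = -(D • (W * Γ t + Γ t * W))) :
    HasDerivAt (fun s => J * ω s + ω s * J + D • (Γ s * ω s + ω s * Γ s))
      (-(ω t * (J * ω t + ω t * J + D • (Γ t * ω t + ω t * Γ t))
        - (J * ω t + ω t * J + D • (Γ t * ω t + ω t * Γ t)) * ω t)) t := by
  have hK := (((hasDerivAt_const t J).matrix_mul hω).fun_add
    (hω.matrix_mul (hasDerivAt_const t J))).fun_add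
    (((hΓ.matrix_mul hω).fun_add (hω.matrix_mul hΓ)).fun_const_smul D)
  rw [← angular_momentum_identity J (ω t) W (Γ t) D hEL]
  simp only [zero_mul, mul_zero, zero_add, add_zero] at hK
  exact hK

end ChaplyginSphere

theorem chaplygin_sphere_closed_system_general
    (n : ℕ)
    (J : Matrix (Fin n) (Fin n) ℝ) (m ρ : ℝ)
    (ω ω' : ℝ → Matrix (Fin n) (Fin n) ℝ)
    (γ γ' v v' F : ℝ → Fin n → ℝ)
    (hω : ∀ t i j, HasDerivAt (fun s => ω s i j) (ω' t i j) t)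
    (hskew : ∀ t, (ω t)ᵀ = -(ω t))
    (hγd : ∀ t i, HasDerivAt (fun s => γ s i) (γ' t i) t)
    (hvd : ∀ t i, HasDerivAt (fun s => v s i) (v' t i) t)
    (hEL : ∀ t, (J * ω' t + ω' t * J)
        + (ω t * (J * ω t + ω t * J) - (J * ω t + ω t * J) * ω t)
        = ρ • (vecMulVec (F t) (γ t) - vecMulVec (γ t) (F t)))
    (htrans : ∀ t, m • (v' t + ω t *ᵥ v t) = F t)
    (hγeq : ∀ t, γ' t = -(ω t *ᵥ γ t))
    (hconstr : ∀ t, v t = -(ρ • (ω t *ᵥ γ t))) :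
    (∀ t i j,
      HasDerivAt
        (fun s => (J * ω s + ω s * J + (m * ρ^2) •
          (vecMulVec (γ s) (γ s) * ω s + ω s * vecMulVec (γ s) (γ s))) i j)
        (-((ω t * (J * ω t + ω t * J + (m * ρ^2) •
              (vecMulVec (γ t) (γ t) * ω t + ω t * vecMulVec (γ t) (γ t)))
          - (J * ω t + ω t * J + (m * ρ^2) •
              (vecMulVec (γ t) (γ t) * ω t + ω t * vecMulVec (γ t) (γ t))) * ω t) i j)) t)
    ∧ (∀ t i j,
      HasDerivAt (fun s => vecMulVec (γ s) (γ s) i j)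
        (-((ω t * vecMulVec (γ t) (γ t) - vecMulVec (γ t) (γ t) * ω t) i j)) t) := by
  have hω t : HasDerivAt ω (ω' t) t := hasDerivAt_iff_entrywise.2 (hω t)
  have hγ t : HasDerivAt γ (-(ω t *ᵥ γ t)) t := hγeq t ▸ hasDerivAt_pi.2 (hγd t)
  have hv t : HasDerivAt v (v' t) t := hasDerivAt_pi.2 (hvd t)
  have hΓ t := hasDerivAt_vecMulVec_self_of_rotation (hskew t) (hγ t)
  have hEL' t : J * ω' t + ω' t * J + (ω t * (J * ω t + ω t * J) - (J * ω t + ω t * J) * ω t)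
      = -((m * ρ ^ 2) • (ω' t * vecMulVec (γ t) (γ t) + vecMulVec (γ t) (γ t) * ω' t)) := by
    rw [hEL t, ← htrans t, rolling_reaction_force (hω t) (hγ t) (hv t) hconstr,
      torque_of_rolling_reaction_force ((hω t).transpose_eq_neg hskew)]
  exact ⟨fun t => hasDerivAt_iff_entrywise.1 (hasDerivAt_angular_momentum (hω t) (hΓ t) (hEL' t)),
    fun t => hasDerivAt_iff_entrywise.1 (hΓ t)⟩

/-- Reduction of the equations of motion of the `n`-dimensional Chaplygin sphere:
eliminating the reaction force `F` from the Euler–Lagrange equations with the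
nonholonomic rolling constraint yields the closed commutative system
`K̇ + [ω,K] = 0`, `Γ̇ + [ω,Γ] = 0`, where `K = Jω + ωJ + D(Γω + ωΓ)`,
`Γ = γ⊗γ`, `D = mρ²`. -/
theorem chaplygin_sphere_closed_system
    (n : ℕ) (hn : 1 ≤ n)
    (J : Matrix (Fin n) (Fin n) ℝ) (hJ : J.IsDiag) (m ρ : ℝ)
    (ω ω' : ℝ → Matrix (Fin n) (Fin n) ℝ)
    (γ γ' v v' F : ℝ → Fin n → ℝ)
    (hω : ∀ t i j, HasDerivAt (fun s => ω s i j) (ω' t i j) t)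
    (hskew : ∀ t, (ω t)ᵀ = -(ω t))
    (hγd : ∀ t i, HasDerivAt (fun s => γ s i) (γ' t i) t)
    (hvd : ∀ t i, HasDerivAt (fun s => v s i) (v' t i) t)
    (hEL : ∀ t, (J * ω' t + ω' t * J)
        + (ω t * (J * ω t + ω t * J) - (J * ω t + ω t * J) * ω t)
        = ρ • (vecMulVec (F t) (γ t) - vecMulVec (γ t) (F t)))
    (htrans : ∀ t, m • (v' t + ω t *ᵥ v t) = F t)
    (hγeq : ∀ t, γ' t = -(ω t *ᵥ γ t))
    (hconstr : ∀ t, v t = -(ρ • (ω t *ᵥ γ t))) :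
    (∀ t i j,
      HasDerivAt
        (fun s => (J * ω s + ω s * J + (m * ρ^2) •
          (vecMulVec (γ s) (γ s) * ω s + ω s * vecMulVec (γ s) (γ s))) i j)
        (-((ω t * (J * ω t + ω t * J + (m * ρ^2) •
              (vecMulVec (γ t) (γ t) * ω t + ω t * vecMulVec (γ t) (γ t)))
          - (J * ω t + ω t * J + (m * ρ^2) •
              (vecMulVec (γ t) (γ t) * ω t + ω t * vecMulVec (γ t) (γ t))) * ω t) i j)) t)
    ∧ (∀ t i j,
      HasDerivAt (fun s => vecMulVec (γ s) (γ s) i j)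
        (-((ω t * vecMulVec (γ t) (γ t) - vecMulVec (γ t) (γ t) * ω t) i j)) t) :=
  chaplygin_sphere_closed_system_general n J m ρ ω ω' γ γ' v v' F hω hskew hγd hvd hEL htrans hγeq
    hconstr
end

section
/- Let n ≥ 1 and suppose K, Γ, ω : ℝ → Mₙ(ℝ) are functions with K and Γ differentiable, satisfying K′(t) + [ω(t), K(t)] = 0 and Γ′(t) + [ω(t), Γ(t)] = 0 for all t, where [A,B] := AB − BA. Then for every pair of natural numbers s, l, the function t ↦ trace(K(t)^s · Γ(t)^l) is constant, and t ↦ trace(K(t)^s) is constant. -/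
/-!
The maps `X ↦ ⁅X, ω(t)⁆` are derivations, so if `A` and `B` both satisfy `Ẋ = ⁅X, ω⁆`, so does
`A * B`; hence so do `K ^ s` and `K ^ s * Γ ^ l`. The trace of a commutator vanishes, so the
trace of any solution of `Ẋ = ⁅X, ω⁆` has zero derivative and is constant.
-/

open Matrix

section LieFlow

variable {𝕜 𝔸 : Type*} [NontriviallyNormedField 𝕜] [NormedRing 𝔸] [NormedAlgebra 𝕜 𝔸]
  {A B : 𝕜 → 𝔸} {w : 𝔸} {t : 𝕜}

theorem HasDerivAt.mul_of_lie (hA : HasDerivAt A ⁅A t, w⁆ t) (hB : HasDerivAt B ⁅B t, w⁆ t) :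
    HasDerivAt (fun s => A s * B s) ⁅A t * B t, w⁆ t := by
  convert hA.fun_mul hB using 1
  simp only [Ring.lie_def]
  noncomm_ring

theorem HasDerivAt.pow_of_lie (hA : HasDerivAt A ⁅A t, w⁆ t) (m : ℕ) :
    HasDerivAt (fun s => A s ^ m) ⁅A t ^ m, w⁆ t := by
  induction m with
  | zero => simpa [Ring.lie_def] using hasDerivAt_const t (1 : 𝔸)
  | succ m ih => simpa only [pow_succ] using ih.mul_of_lie hA

end LieFlow

namespace Matrix

open scoped Matrix.Norms.Operator

variable {m n : Type*} [Fintype m] [Fintype n]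

theorem hasDerivAt_of_forall_hasDerivAt_apply [DecidableEq m] [DecidableEq n]
    {M : ℝ → Matrix m n ℝ} {M' : Matrix m n ℝ} {t : ℝ}
    (h : ∀ i j, HasDerivAt (fun s => M s i j) (M' i j) t) : HasDerivAt M M' t := by
  have hsum : HasDerivAt (fun s => ∑ i, ∑ j, M s i j • single i j (1 : ℝ))
      (∑ i, ∑ j, M' i j • single i j (1 : ℝ)) t :=
    .fun_sum fun i _ => .fun_sum fun j _ => (h i j).smul_const _
  simpa only [smul_single, smul_eq_mul, mul_one, ← matrix_eq_sum_single] using hsum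

theorem trace_eq_of_hasDerivAt_lie {M ω : ℝ → Matrix n n ℝ}
    (hM : ∀ t, HasDerivAt M ⁅M t, ω t⁆ t) (t₁ t₂ : ℝ) : (M t₁).trace = (M t₂).trace := by
  have htrace : ∀ t, HasDerivAt (fun s => (M s).trace) 0 t := fun t => by
    have h := (traceLinearMap n ℝ ℝ).toContinuousLinearMap.hasFDerivAt.comp_hasDerivAt t (hM t)
    have h0 : (traceLinearMap n ℝ ℝ).toContinuousLinearMap ⁅M t, ω t⁆ = 0 := by
      change trace ⁅M t, ω t⁆ = 0
      rw [Ring.lie_def, trace_sub, trace_mul_comm, sub_self]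
    exact h.congr_deriv h0
  exact is_const_of_deriv_eq_zero (fun t => (htrace t).differentiableAt)
    (fun t => (htrace t).deriv) t₁ t₂

end Matrix

theorem chaplygin_sphere_trace_integrals_general
    (n : ℕ)
    (K Γ ω : ℝ → Matrix (Fin n) (Fin n) ℝ)
    (hK : ∀ t i j, HasDerivAt (fun s => K s i j)
        (-((ω t * K t - K t * ω t) i j)) t)
    (hΓ : ∀ t i j, HasDerivAt (fun s => Γ s i j)
        (-((ω t * Γ t - Γ t * ω t) i j)) t) :
    ∀ (s l : ℕ) (t₁ t₂ : ℝ),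
      (K t₁ ^ s * Γ t₁ ^ l).trace = (K t₂ ^ s * Γ t₂ ^ l).trace ∧
      (K t₁ ^ s).trace = (K t₂ ^ s).trace := by
  open scoped Matrix.Norms.Operator in
  have hasDerivAt_lie : ∀ X : ℝ → Matrix (Fin n) (Fin n) ℝ,
      (∀ t i j, HasDerivAt (fun s => X s i j) (-((ω t * X t - X t * ω t) i j)) t) →
      ∀ t, HasDerivAt X ⁅X t, ω t⁆ t := fun X hX t =>
    hasDerivAt_of_forall_hasDerivAt_apply fun i j => by simpa [Ring.lie_def] using hX t i j
  intro s l t₁ t₂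
  have hK' := hasDerivAt_lie K hK
  have hΓ' := hasDerivAt_lie Γ hΓ
  exact ⟨trace_eq_of_hasDerivAt_lie
      (fun t => ((hK' t).pow_of_lie s).mul_of_lie ((hΓ' t).pow_of_lie l)) t₁ t₂,
    trace_eq_of_hasDerivAt_lie (fun t => (hK' t).pow_of_lie s) t₁ t₂⟩

/-- The first integrals (md2.19) of the `n`-dimensional Chaplygin sphere: along
solutions of `K̇ + [ω,K] = 0`, `Γ̇ + [ω,Γ] = 0`, all traces `tr(K^s Γ^l)` and
`tr(K^s)` are conserved. -/
theorem chaplygin_sphere_trace_integrals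
    (n : ℕ) (hn : 1 ≤ n)
    (K Γ ω : ℝ → Matrix (Fin n) (Fin n) ℝ)
    (hK : ∀ t i j, HasDerivAt (fun s => K s i j)
        (-((ω t * K t - K t * ω t) i j)) t)
    (hΓ : ∀ t i j, HasDerivAt (fun s => Γ s i j)
        (-((ω t * Γ t - Γ t * ω t) i j)) t) :
    ∀ (s l : ℕ) (t₁ t₂ : ℝ),
      (K t₁ ^ s * Γ t₁ ^ l).trace = (K t₂ ^ s * Γ t₂ ^ l).trace ∧
      (K t₁ ^ s).trace = (K t₂ ^ s).trace :=
  chaplygin_sphere_trace_integrals_general n K Γ ω hK hΓ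
end

section
/- Let Λ be a constant diagonal 3×3 real matrix and D a real constant. Suppose ω, γ : ℝ → ℝ³ are differentiable, define K(t) := Λω(t) − D·⟨ω(t), γ(t)⟩·γ(t), and assume that for all t: K′(t) = K(t) × ω(t) and γ′(t) = γ(t) × ω(t), where × is the cross product on ℝ³. Then the kinetic energy t ↦ ⟨K(t), ω(t)⟩ is constant. -/
/-!
Differentiate the energy `E = ⟨K, ω⟩` in two ways. The equation `K̇ = K × ω` gives
`Ė = ⟨K × ω, ω⟩ + ⟨K, ω̇⟩ = ⟨K, ω̇⟩`. On the other hand `E = ⟨Λω, ω⟩ - D⟨ω, γ⟩²`, and since `Λ`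
is symmetric and `⟨ω, γ̇⟩ = ⟨ω, γ × ω⟩ = 0`, this gives `Ė = 2⟨K, ω̇⟩`. Hence `Ė = 0`.
-/

open Matrix

section Calculus

variable {ι κ : Type*} [Fintype ι] {f g : ℝ → ι → ℝ} {f' g' : ι → ℝ} {t : ℝ}

theorem HasDerivAt.dotProduct (hf : HasDerivAt f f' t) (hg : HasDerivAt g g' t) :
    HasDerivAt (fun s => f s ⬝ᵥ g s) (f' ⬝ᵥ g t + f t ⬝ᵥ g') t := by
  have hfi := hasDerivAt_pi.mp hf
  have hgi := hasDerivAt_pi.mp hg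
  exact (HasDerivAt.fun_sum (u := Finset.univ) fun i _ => (hfi i).fun_mul (hgi i)).congr_deriv
    Finset.sum_add_distrib

theorem HasDerivAt.mulVec (A : Matrix κ ι ℝ) (hf : HasDerivAt f f' t) :
    HasDerivAt (fun s => A *ᵥ f s) (A *ᵥ f') t :=
  hasDerivAt_pi.mpr fun i => by
    simpa [Matrix.mulVec] using (hasDerivAt_const t (A i)).dotProduct hf

end Calculus

def contactMomentum {ι : Type*} [Fintype ι] (A : Matrix ι ι ℝ) (D : ℝ) (ω γ : ι → ℝ) : ι → ℝ :=
  A *ᵥ ω - (D * (ω ⬝ᵥ γ)) • γ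

section ContactMomentum

variable {ι : Type*} [Fintype ι] {A : Matrix ι ι ℝ} (D : ℝ)

theorem contactMomentum_dotProduct (ω γ : ι → ℝ) :
    contactMomentum A D ω γ ⬝ᵥ ω = ω ⬝ᵥ A *ᵥ ω - D * ((ω ⬝ᵥ γ) * (ω ⬝ᵥ γ)) := by
  simp only [contactMomentum, sub_dotProduct, smul_dotProduct, smul_eq_mul, dotProduct_comm γ ω,
    dotProduct_comm (A *ᵥ ω) ω, mul_assoc]

theorem hasDerivAt_contactMomentum_dotProduct (hA : A.IsSymm) {ω γ : ℝ → ι → ℝ}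
    {ω' γ' : ι → ℝ} {t : ℝ} (hω : HasDerivAt ω ω' t) (hγ : HasDerivAt γ γ' t)
    (horth : ω t ⬝ᵥ γ' = 0) :
    HasDerivAt (fun s => contactMomentum A D (ω s) (γ s) ⬝ᵥ ω s)
      (2 * (contactMomentum A D (ω t) (γ t) ⬝ᵥ ω')) t := by
  have hsymm : ω t ⬝ᵥ A *ᵥ ω' = ω' ⬝ᵥ A *ᵥ ω t := by
    rw [dotProduct_mulVec, ← mulVec_transpose, hA.eq, dotProduct_comm]
  simp only [contactMomentum_dotProduct]
  refine ((hω.dotProduct (hω.mulVec A)).fun_sub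
    (((hω.dotProduct hγ).fun_mul (hω.dotProduct hγ)).const_mul D)).congr_deriv ?_
  simp only [contactMomentum, sub_dotProduct, smul_dotProduct, smul_eq_mul, hsymm, horth,
    dotProduct_comm (A *ᵥ ω t) ω', dotProduct_comm (γ t) ω']
  ring

end ContactMomentum

theorem chaplygin_sphere_energy_integral_general
    (Λ : Matrix (Fin 3) (Fin 3) ℝ) (hΛ : Λ.IsDiag) (D : ℝ)
    (ω γ : ℝ → Fin 3 → ℝ)
    (hωd : Differentiable ℝ ω)
    (K : ℝ → Fin 3 → ℝ)
    (hKdef : ∀ t, K t = Λ *ᵥ ω t - (D * (ω t ⬝ᵥ γ t)) • γ t)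
    (hK : ∀ t, HasDerivAt K (crossProduct (K t) (ω t)) t)
    (hγ : ∀ t, HasDerivAt γ (crossProduct (γ t) (ω t)) t) :
    ∀ t₁ t₂ : ℝ, K t₁ ⬝ᵥ ω t₁ = K t₂ ⬝ᵥ ω t₂ := by
  have hE : ∀ t, HasDerivAt (fun s => K s ⬝ᵥ ω s) 0 t := by
    intro t
    have hω := (hωd t).hasDerivAt
    have hEK : HasDerivAt (fun s => K s ⬝ᵥ ω s) (K t ⬝ᵥ deriv ω t) t := by
      simpa [dotProduct_comm _ (ω t), dot_cross_self] using (hK t).dotProduct hω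
    have hEΛ : HasDerivAt (fun s => K s ⬝ᵥ ω s) (2 * (K t ⬝ᵥ deriv ω t)) t := by
      obtain rfl : K = fun s => contactMomentum Λ D (ω s) (γ s) := funext hKdef
      exact hasDerivAt_contactMomentum_dotProduct D hΛ.isSymm hω (hγ t) (dot_cross_self _ _)
    have hdouble := hEK.unique hEΛ
    rwa [show K t ⬝ᵥ deriv ω t = 0 by linarith] at hEK
  exact is_const_of_deriv_eq_zero (fun t => (hE t).differentiableAt) fun t => (hE t).deriv

/-- The energy integral of the classical Chaplygin sphere: along solutions of
`K̇ = K × ω`, `γ̇ = γ × ω`, with `K = Λω − D⟨ω,γ⟩γ`, the kinetic energy `⟨K,ω⟩`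
is constant. -/
theorem chaplygin_sphere_energy_integral
    (Λ : Matrix (Fin 3) (Fin 3) ℝ) (hΛ : Λ.IsDiag) (D : ℝ)
    (ω γ : ℝ → Fin 3 → ℝ)
    (hωd : Differentiable ℝ ω) (hγd : Differentiable ℝ γ)
    (K : ℝ → Fin 3 → ℝ)
    (hKdef : ∀ t, K t = Λ *ᵥ ω t - (D * (ω t ⬝ᵥ γ t)) • γ t)
    (hK : ∀ t, HasDerivAt K (crossProduct (K t) (ω t)) t)
    (hγ : ∀ t, HasDerivAt γ (crossProduct (γ t) (ω t)) t) :
    ∀ t₁ t₂ : ℝ, K t₁ ⬝ᵥ ω t₁ = K t₂ ⬝ᵥ ω t₂ :=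
  chaplygin_sphere_energy_integral_general Λ hΛ D ω γ hωd K hKdef hK hγ
end

section
/- Let Λ be a constant diagonal invertible 3×3 real matrix, D a real constant, and h ≠ 0 a real constant. Suppose ω, γ : ℝ → ℝ³ are differentiable, K(t) := Λω(t) − D·⟨ω(t), γ(t)⟩·γ(t), and for all t: K′(t) = K(t) × ω(t), γ′(t) = γ(t) × ω(t), ⟨γ(t), γ(t)⟩ = 1, and K(t) = h·γ(t). Then: (i) the function t ↦ ⟨ω(t), γ(t)⟩ is constant; (ii) for all t, Λω(t) = (h + D·⟨ω(t), γ(t)⟩)·γ(t); and (iii) ω satisfies the Euler top equation Λω′(t) = (Λω(t)) × ω(t) for all t. -/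
open Matrix

/-! With `f = ⟨ω, γ⟩`, the condition `K = hγ` reads `Λω = (h + D f) γ`, and `f' = ⟨ω', γ⟩`
because `γ' = γ × ω` is orthogonal to `ω`. Differentiating, `Λω' = (h + D f) γ × ω + D f' γ`.
Pairing with `ω`, the symmetry of `Λ` gives `⟨Λω', ω⟩ = ⟨ω', Λω⟩ = (h + D f) f'`, while the
formula for `Λω'` gives `D f' f`; hence `h f' = 0`. So `f` is constant and
`Λω' = (h + D f) γ × ω = Λω × ω`. -/

section Calculus

variable {𝕜 : Type*} [NontriviallyNormedField 𝕜] {t : 𝕜}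

theorem HasDerivAt.dotProduct_s14 {ι : Type*} [Fintype ι] {u v : 𝕜 → ι → 𝕜} {u' v' : ι → 𝕜}
    (hu : HasDerivAt u u' t) (hv : HasDerivAt v v' t) :
    HasDerivAt (fun s => u s ⬝ᵥ v s) (u' ⬝ᵥ v t + u t ⬝ᵥ v') t :=
  (HasDerivAt.fun_sum fun i _ => (hasDerivAt_pi.1 hu i).mul (hasDerivAt_pi.1 hv i)).congr_deriv
    Finset.sum_add_distrib

theorem HasDerivAt.mulVec_s14 {m n : Type*} [Fintype n] (A : Matrix m n 𝕜)
    {u : 𝕜 → n → 𝕜} {u' : n → 𝕜} (hu : HasDerivAt u u' t) :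
    HasDerivAt (fun s => A *ᵥ u s) (A *ᵥ u') t :=
  hasDerivAt_pi.2 fun i => ((hasDerivAt_const t (A i)).dotProduct_s14 hu).congr_deriv <| by
    rw [zero_dotProduct, zero_add]
    rfl

end Calculus

theorem HasDerivAt.dotProduct_of_hasDerivAt_cross {ω γ : ℝ → Fin 3 → ℝ} {ω' : Fin 3 → ℝ}
    {t : ℝ} (hω : HasDerivAt ω ω' t) (hγ : HasDerivAt γ (γ t ⨯₃ ω t) t) :
    HasDerivAt (fun s => ω s ⬝ᵥ γ s) (ω' ⬝ᵥ γ t) t := by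
  simpa using hω.dotProduct_s14 hγ

theorem dotProduct_eq_zero_of_mulVec_eq_smul {n R : Type*} [Fintype n] [CommRing R]
    [NoZeroDivisors R] {Λ : Matrix n n R} (hΛ : Λ.IsSymm) {D h : R} (hh : h ≠ 0)
    {w w' g v : n → R} (hw : Λ *ᵥ w = (h + D * (w ⬝ᵥ g)) • g)
    (hw' : Λ *ᵥ w' = v + (D * (w' ⬝ᵥ g)) • g) (hv : w ⬝ᵥ v = 0) :
    w' ⬝ᵥ g = 0 := by
  have by_symm : w ⬝ᵥ Λ *ᵥ w' = (h + D * (w ⬝ᵥ g)) * (w' ⬝ᵥ g) := by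
    rw [dotProduct_mulVec, ← mulVec_transpose, hΛ.eq, hw, smul_dotProduct, smul_eq_mul,
      dotProduct_comm g]
  have by_hw' : w ⬝ᵥ Λ *ᵥ w' = D * (w' ⬝ᵥ g) * (w ⬝ᵥ g) := by
    rw [hw', dotProduct_add, hv, dotProduct_smul, smul_eq_mul, zero_add]
  have : h * (w' ⬝ᵥ g) = 0 := by linear_combination by_hw' - by_symm
  exact (mul_eq_zero.1 this).resolve_left hh

theorem chaplygin_sphere_vertical_momentum_general
    (Λ : Matrix (Fin 3) (Fin 3) ℝ) (hΛ : Λ.IsDiag)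
    (D h : ℝ) (hh : h ≠ 0)
    (ω γ : ℝ → Fin 3 → ℝ)
    (hωd : Differentiable ℝ ω)
    (K : ℝ → Fin 3 → ℝ)
    (hKdef : ∀ t, K t = Λ *ᵥ ω t - (D * (ω t ⬝ᵥ γ t)) • γ t)
    (hγ : ∀ t, HasDerivAt γ (crossProduct (γ t) (ω t)) t)
    (hvert : ∀ t, K t = h • γ t) :
    (∀ t₁ t₂ : ℝ, ω t₁ ⬝ᵥ γ t₁ = ω t₂ ⬝ᵥ γ t₂) ∧
    (∀ t, Λ *ᵥ ω t = (h + D * (ω t ⬝ᵥ γ t)) • γ t) ∧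
    (∀ t, HasDerivAt (fun s => Λ *ᵥ ω s) (crossProduct (Λ *ᵥ ω t) (ω t)) t) := by
  have hΛω : ∀ t, Λ *ᵥ ω t = (h + D * (ω t ⬝ᵥ γ t)) • γ t := fun t => by
    rw [add_smul, ← hvert t, hKdef t, sub_add_cancel]
  have hω : ∀ t, HasDerivAt ω (deriv ω t) t := fun t => (hωd t).hasDerivAt
  have hf : ∀ t, HasDerivAt (fun s => ω s ⬝ᵥ γ s) (deriv ω t ⬝ᵥ γ t) t := fun t =>
    (hω t).dotProduct_of_hasDerivAt_cross (hγ t)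
  have hΛω' : ∀ t, Λ *ᵥ deriv ω t =
      (h + D * (ω t ⬝ᵥ γ t)) • γ t ⨯₃ ω t + (D * (deriv ω t ⬝ᵥ γ t)) • γ t := fun t =>
    ((hω t).mulVec_s14 Λ).unique <| by
      rw [funext hΛω]
      exact (((hf t).const_mul D).const_add h).smul (hγ t)
  have hf' : ∀ t, deriv ω t ⬝ᵥ γ t = 0 := fun t =>
    dotProduct_eq_zero_of_mulVec_eq_smul hΛ.isSymm hh (hΛω t) (hΛω' t) (by simp)
  refine ⟨fun t₁ t₂ => ?_, hΛω, fun t => ?_⟩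
  · exact is_const_of_deriv_eq_zero (fun t => (hf t).differentiableAt)
      (fun t => (hf t).deriv.trans (hf' t)) t₁ t₂
  · simpa [hΛω' t, hf' t, hΛω t] using (hω t).mulVec_s14 Λ

/-- The special case of the classical Chaplygin sphere with vertical momentum
`K = hγ`: then `⟨ω,γ⟩` is constant, `Λω = (h + D⟨ω,γ⟩)γ`, and `ω` satisfies the
Euler top equation `Λω̇ = (Λω) × ω`. -/
theorem chaplygin_sphere_vertical_momentum
    (Λ : Matrix (Fin 3) (Fin 3) ℝ) (hΛ : Λ.IsDiag) (hdet : IsUnit Λ.det)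
    (D h : ℝ) (hh : h ≠ 0)
    (ω γ : ℝ → Fin 3 → ℝ)
    (hωd : Differentiable ℝ ω) (hγd : Differentiable ℝ γ)
    (K : ℝ → Fin 3 → ℝ)
    (hKdef : ∀ t, K t = Λ *ᵥ ω t - (D * (ω t ⬝ᵥ γ t)) • γ t)
    (hK : ∀ t, HasDerivAt K (crossProduct (K t) (ω t)) t)
    (hγ : ∀ t, HasDerivAt γ (crossProduct (γ t) (ω t)) t)
    (hunit : ∀ t, γ t ⬝ᵥ γ t = 1)
    (hvert : ∀ t, K t = h • γ t) :
    (∀ t₁ t₂ : ℝ, ω t₁ ⬝ᵥ γ t₁ = ω t₂ ⬝ᵥ γ t₂) ∧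
    (∀ t, Λ *ᵥ ω t = (h + D * (ω t ⬝ᵥ γ t)) • γ t) ∧
    (∀ t, HasDerivAt (fun s => Λ *ᵥ ω s) (crossProduct (Λ *ᵥ ω t) (ω t)) t) :=
  chaplygin_sphere_vertical_momentum_general Λ hΛ D h hh ω γ hωd K hKdef hγ hvert
end

section
/- Let J₁, J₂, J₃, D be real numbers, J := diag(J₁,J₂,J₃), let (q₀,q₁,q₂,q₃) ∈ ℝ⁴ satisfy q₀² + q₁² + q₂² + q₃² = 1 with q := (q₁,q₂,q₃) ∈ ℝ³, and let γ ∈ ℝ³ with ⟨γ,γ⟩ = 1, Γ := γγᵀ. Let Ω be the Rodrigues rotation matrix Ω = [[q₀²+q₁²−q₂²−q₃², 2(q₁q₂−q₀q₃), 2(q₁q₃+q₀q₂)], [2(q₁q₂+q₀q₃), q₀²−q₁²+q₂²−q₃², 2(q₂q₃−q₀q₁)], [2(q₁q₃−q₀q₂), 2(q₂q₃+q₀q₁), q₀²−q₁²−q₂²+q₃²]], set M := ΩJ − JΩᵀ and K := M + (D/2)(ΩΓ − ΓΩᵀ) + (D/2)(ΓΩ − ΩᵀΓ). Then the vector (K₃₂,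 K₁₃, K₂₁) equals (M₃₂, M₁₃, M₂₁) + 2D·q₀·(q − ⟨γ, q⟩·γ). -/
open Matrix

/-- The vector form of the discrete momentum (dis_K) of the discrete Chaplygin
sphere on `E(3)`: with `Γ = γγᵀ`, the skew-symmetric matrix
`K = M + (D/2)(ΩΓ − ΓΩᵀ) + (D/2)(ΓΩ − ΩᵀΓ)` corresponds under `so(3) ≅ ℝ³` to
`M⃗ + 2Dq₀(q − ⟨γ,q⟩γ)`. -/
theorem discrete_contact_momentum_vector_form
    (J1 J2 J3 D : ℝ) (J : Matrix (Fin 3) (Fin 3) ℝ)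
    (hJ : J = Matrix.diagonal ![J1, J2, J3])
    (q0 q1 q2 q3 : ℝ) (hq : q0^2 + q1^2 + q2^2 + q3^2 = 1)
    (q : Fin 3 → ℝ) (hqv : q = ![q1, q2, q3])
    (γ : Fin 3 → ℝ) (hγ : γ ⬝ᵥ γ = 1)
    (Γ : Matrix (Fin 3) (Fin 3) ℝ) (hΓ : Γ = vecMulVec γ γ)
    (Ω : Matrix (Fin 3) (Fin 3) ℝ)
    (hΩ : Ω = !![q0^2 + q1^2 - q2^2 - q3^2, 2*(q1*q2 - q0*q3), 2*(q1*q3 + q0*q2);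
                 2*(q1*q2 + q0*q3), q0^2 - q1^2 + q2^2 - q3^2, 2*(q2*q3 - q0*q1);
                 2*(q1*q3 - q0*q2), 2*(q2*q3 + q0*q1), q0^2 - q1^2 - q2^2 + q3^2])
    (M : Matrix (Fin 3) (Fin 3) ℝ) (hM : M = Ω * J - J * Ωᵀ)
    (K : Matrix (Fin 3) (Fin 3) ℝ)
    (hK : K = M + (D/2) • (Ω * Γ - Γ * Ωᵀ) + (D/2) • (Γ * Ω - Ωᵀ * Γ)) :
    ![K 2 1, K 0 2, K 1 0]
      = ![M 2 1, M 0 2, M 1 0] + (2 * D * q0) • (q - (γ ⬝ᵥ q) • γ) := by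
  subst hJ hqv hΓ hΩ hM hK
  simp only [dotProduct, Fin.sum_univ_three] at hγ ⊢
  funext i
  fin_cases i <;>
    simp [Matrix.mul_apply, Fin.sum_univ_three, vecMulVec_apply, Matrix.add_apply,
      Matrix.sub_apply, Matrix.smul_apply, Matrix.transpose_apply, Pi.add_apply,
      Pi.sub_apply, Pi.smul_apply, smul_eq_mul, Matrix.vecHead, Matrix.vecTail,
      Matrix.vecMul, dotProduct, Matrix.cons_val', Matrix.cons_val_zero, Matrix.cons_val_one,
      Matrix.head_cons, Matrix.cons_val_fin_one, Matrix.empty_val', Matrix.head_fin_const,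
      Function.comp]
  · linear_combination (2*D*q0*q1) * hγ
  · linear_combination (2*D*q0*q2) * hγ
  · linear_combination (2*D*q0*q3) * hγ
end

section
/- Let n ≥ 1, J a constant diagonal n×n real matrix, D real, Ω an n×n real matrix with ΩΩᵀ = I, Γ a symmetric n×n real matrix, and Γ′ := ΩᵀΓΩ. Define A := J + (D/2)(Γ + Γ′), K := Ω(J + (D/2)Γ) − (J + (D/2)Γ)Ωᵀ + (D/2)(ΓΩ − ΩᵀΓ), and K′ := ΩᵀKΩ. Then the intertwining relations hold: K = ΩA − AΩᵀ and K′ = AΩ − ΩᵀA. -/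
open Matrix

/-- The intertwining relations of Remark 3: the subsequent discrete momenta
`K` and `K' = ΩᵀKΩ` of the discrete Chaplygin sphere can both be written
through the single symmetric matrix `A = J + (D/2)(Γ + Γ')`:
`K = ΩA − AΩᵀ` and `K' = AΩ − ΩᵀA`. -/
theorem discrete_chaplygin_intertwining
    (n : ℕ) (hn : 1 ≤ n)
    (J : Matrix (Fin n) (Fin n) ℝ) (hJ : J.IsDiag) (D : ℝ)
    (Ω Γ : Matrix (Fin n) (Fin n) ℝ) (hΩ : Ω * Ωᵀ = 1) (hΓ : Γᵀ = Γ)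
    (Γ' A K K' : Matrix (Fin n) (Fin n) ℝ)
    (hΓ' : Γ' = Ωᵀ * Γ * Ω)
    (hA : A = J + (D/2) • (Γ + Γ'))
    (hK : K = Ω * (J + (D/2) • Γ) - (J + (D/2) • Γ) * Ωᵀ + (D/2) • (Γ * Ω - Ωᵀ * Γ))
    (hK' : K' = Ωᵀ * K * Ω) :
    K = Ω * A - A * Ωᵀ ∧ K' = A * Ω - Ωᵀ * A := by
  have hΩ' : Ωᵀ * Ω = 1 := mul_eq_one_comm.mp hΩ
  have hΩΓ' : Ω * Γ' = Γ * Ω := by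
    rw [hΓ', ← mul_assoc, ← mul_assoc, hΩ, one_mul]
  have hΓ'Ω : Γ' * Ωᵀ = Ωᵀ * Γ := by
    rw [hΓ', mul_assoc, hΩ, mul_one]
  have h1 : K = Ω * A - A * Ωᵀ := by
    rw [hK, hA]
    simp only [mul_add, add_mul, smul_add, smul_sub, mul_smul_comm, smul_mul_assoc, hΩΓ', hΓ'Ω]
    abel
  refine ⟨h1, ?_⟩
  rw [hK', h1]
  have : Ωᵀ * (Ω * A - A * Ωᵀ) * Ω
      = Ωᵀ * Ω * A * Ω - Ωᵀ * A * (Ωᵀ * Ω) := by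
    noncomm_ring
  rw [this, hΩ', one_mul, mul_one]
end
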